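/- Among all trees on n ≥ 2 vertices, the star K_{1,n-1} is the unique (up to isomorphism) tree maximizing the largest Laplacian eigenvalue. -/

import Mathlib

open SimpleGraph Finset Matrix

/-- The degree of vertex `v`: the number of its neighbors. -/
noncomputable def gdeg {V : Type*} (G : SimpleGraph V) (v : V) : ℕ :=
  (G.neighborSet v).ncard

open scoped Classical in
/-- The Laplacian matrix `L = D - A` of a graph, with real entries. -/
noncomputable def lap {V : Type*} [Fintype V] [DecidableEq V] (G : SimpleGraph V) :
    Matrix V V ℝ :=
  Matrix.of fun u v =>
    (if u = v then (gdeg G u : ℝ) else 0) - (if G.Adj u v then 1 else 0)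

/-- `lam` is the largest Laplacian eigenvalue of `G`. -/
def IsMaxEig {V : Type*} [Fintype V] [DecidableEq V] (G : SimpleGraph V) (lam : ℝ) : Prop :=
  IsGreatest {μ : ℝ | ∃ f : V → ℝ, f ≠ 0 ∧ (lap G).mulVec f = μ • f} lam

/-!
Let `n = |V|`. On vectors with zero sum `L(G) + L(Gᶜ) = L(Kₙ)` acts as `n • id`, and eigenvectors
of nonzero eigenvalues have zero sum; so `L(G) f = μ f` gives `L(Gᶜ) f = (n - μ) f`, and positive
semidefiniteness of `L(Gᶜ)` gives `μ ≤ n`, with equality iff `f` is constant on the components of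
`Gᶜ`. A universal vertex `c` is isolated in `Gᶜ`, so `f = n • e_c - 1` attains `n`. If a tree `T`
attains `n`, then `Tᶜ` is disconnected, `T` contains all edges between a component `A` of `Tᶜ` and
`Aᶜ`, and `|A| · |Aᶜ| ≤ n - 1` forces one side to be a single, universal, vertex. A tree with a
universal vertex is the star.
-/

namespace SimpleGraph

section

variable {V : Type*} {G : SimpleGraph V}

theorem isUniversal_of_forall_adj_compl {A : Finset V} {c : V} (hA : A = {c})
    (hadj : ∀ x ∈ A, ∀ y ∉ A, G.Adj x y) : G.IsUniversal c :=
  fun _ hcv ↦ hadj c (by simp [hA]) _ (by simpa [hA, eq_comm] using hcv)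

theorem IsTree.eq_starGraph_of_isUniversal (hT : G.IsTree) {c : V} (hc : G.IsUniversal c) :
    G = starGraph c := by
  refine ((isTree_iff_minimal_connected.1 hT).eq_of_le (connected_starGraph c) ?_).symm
  rintro u v ⟨huv, rfl | rfl⟩
  · exact hc huv
  · exact (hc huv.symm).symm

theorem Iso.isUniversal_iff {W : Type*} {H : SimpleGraph W} (φ : G ≃g H) {v : V} :
    H.IsUniversal (φ v) ↔ G.IsUniversal v := by
  refine ⟨fun h w hvw ↦ φ.map_adj_iff.1 (h (φ.injective.ne hvw)), fun h w hvw ↦ ?_⟩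
  rw [← φ.apply_symm_apply w] at hvw ⊢
  exact φ.map_adj_iff.2 (h fun hv ↦ hvw (congrArg φ hv))

theorem isUniversal_completeBipartiteGraph_inl {α β : Type*} [Subsingleton α] (a : α) :
    (completeBipartiteGraph α β).IsUniversal (Sum.inl a) := by
  rintro (a' | b) h
  · exact absurd (congrArg Sum.inl (Subsingleton.elim a a')) h
  · simp

variable [DecidableEq V]

def completeBipartiteGraphIsoStarGraph (c : V) :
    completeBipartiteGraph {v // v = c} {v // v ≠ c} ≃g starGraph c where
  toEquiv := Equiv.sumCompl (· = c)
  map_rel_iff' := by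
    rintro (⟨u, hu⟩ | ⟨u, hu⟩) (⟨v, hv⟩ | ⟨v, hv⟩) <;> simp <;> grind

end

section

variable {V : Type*} [Fintype V] [DecidableEq V] {G : SimpleGraph V} [DecidableRel G.Adj]

theorem card_mul_card_compl_le_card_edgeFinset {A : Finset V}
    (hA : ∀ x ∈ A, ∀ y ∉ A, G.Adj x y) : #A * #Aᶜ ≤ #G.edgeFinset := by
  rw [← card_product]
  refine card_le_card_of_injOn (fun p ↦ s(p.1, p.2)) (fun p hp ↦ ?_) fun p hp q hq hpq ↦ ?_
  · simp only [coe_product, Set.mem_prod, mem_coe, mem_compl] at hp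
    simpa using hA _ hp.1 _ hp.2
  · simp only [coe_product, Set.mem_prod, mem_coe, mem_compl] at hp hq
    rcases Sym2.eq_iff.1 hpq with ⟨h₁, h₂⟩ | ⟨h₁, -⟩
    · exact Prod.ext h₁ h₂
    · exact absurd (h₁ ▸ hp.1) hq.2

theorem IsTree.exists_isUniversal_of_not_preconnected_compl (hT : G.IsTree)
    (h : ¬ Gᶜ.Preconnected) : ∃ c, G.IsUniversal c := by
  obtain ⟨a, b, hab⟩ : ∃ a b, ¬ Gᶜ.Reachable a b := by simpa [Preconnected] using h
  set A : Finset V := {x | Gᶜ.Reachable a x}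
  have hadj : ∀ x ∈ A, ∀ y ∉ A, G.Adj x y := by
    intro x hx y hy
    simp only [A, mem_filter, mem_univ, true_and] at hx hy
    by_contra hxy
    have hne : x ≠ y := by rintro rfl; exact hy hx
    exact hy (hx.trans ((compl_adj G x y).2 ⟨hne, hxy⟩).reachable)
  have hcount := card_mul_card_compl_le_card_edgeFinset hadj
  have hedges := hT.card_edgeFinset
  have hsplit := card_add_card_compl A
  have hA_pos : 0 < #A := card_pos.2 ⟨a, by simp [A]⟩
  have hAc_pos : 0 < #Aᶜ := card_pos.2 ⟨b, by simp [A, hab]⟩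
  obtain hA | hAc : #A = 1 ∨ #Aᶜ = 1 := by
    by_contra! h
    have : 2 ≤ #A := by omega
    have : 2 ≤ #Aᶜ := by omega
    nlinarith
  · obtain ⟨c, hc⟩ := card_eq_one.1 hA
    exact ⟨c, isUniversal_of_forall_adj_compl hc hadj⟩
  · obtain ⟨c, hc⟩ := card_eq_one.1 hAc
    refine ⟨c, isUniversal_of_forall_adj_compl hc fun x hx y hy ↦ ?_⟩
    exact (hadj y (by simpa using hy) x (mem_compl.1 hx)).symm

variable (G) in
theorem lap_eq_lapMatrix : lap G = G.lapMatrix ℝ := by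
  ext u v
  have hdeg : gdeg G u = G.degree u := by
    rw [gdeg, ← card_neighborSet_eq_degree, Set.ncard_eq_toFinset_card', Set.toFinset_card]
  simp [lap, lapMatrix, degMatrix, adjMatrix_apply, diagonal_apply, hdeg]

variable (G) in
theorem lapMatrix_add_lapMatrix_compl :
    G.lapMatrix ℝ + Gᶜ.lapMatrix ℝ = (⊤ : SimpleGraph V).lapMatrix ℝ := by
  rw [lapMatrix, lapMatrix, lapMatrix,
    ← (isCompl_compl (x := G)).adjMatrix_add_adjMatrix_eq_adjMatrix_completeGraph ℝ]
  ext u v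
  by_cases h : u = v
  · subst h
    have hdeg : G.degree u + Gᶜ.degree u = Fintype.card V - 1 := by
      have := G.degree_lt_card_verts u
      rw [degree_compl]
      omega
    simp [degMatrix, ← hdeg]
  · simp only [degMatrix, Matrix.add_apply, Matrix.sub_apply, diagonal_apply_ne _ h,
      adjMatrix_apply, zero_sub, compl_adj, ne_eq, complete_graph_degree, neg_add_rev]
    ring

theorem lapMatrix_top_mulVec {f : V → ℝ} (hf : ∑ v, f v = 0) :
    (⊤ : SimpleGraph V).lapMatrix ℝ *ᵥ f = (Fintype.card V : ℝ) • f := by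
  ext v
  have hsum : ∑ u ∈ {v}ᶜ, f u = -f v := by
    rw [← sum_compl_add_sum {v}, sum_singleton] at hf
    linarith
  have hcard : 1 ≤ Fintype.card V := Fintype.card_pos_iff.2 ⟨v⟩
  rw [lapMatrix_mulVec_apply, neighborFinset_top, hsum,
    show (⊤ : SimpleGraph V).degree v = Fintype.card V - 1 from complete_graph_degree v]
  simp only [Nat.cast_sub hcard, Nat.cast_one, sub_neg_eq_add, Pi.smul_apply, smul_eq_mul]
  ring

theorem sum_eq_zero_of_lapMatrix_mulVec_eq_smul {f : V → ℝ} {μ : ℝ}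
    (hf : G.lapMatrix ℝ *ᵥ f = μ • f) (hμ : μ ≠ 0) : ∑ v, f v = 0 := by
  have h : μ * ∑ v, f v = 0 :=
    calc μ * ∑ v, f v = (fun _ ↦ 1) ⬝ᵥ (G.lapMatrix ℝ *ᵥ f) := by
          simp [hf, dotProduct, mul_sum]
      _ = (G.lapMatrix ℝ *ᵥ fun _ ↦ 1) ⬝ᵥ f := by
          rw [dotProduct_mulVec, ← mulVec_transpose, isSymm_lapMatrix]
      _ = 0 := by simp [lapMatrix_mulVec_const_eq_zero]
  exact (mul_eq_zero.1 h).resolve_left hμ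

theorem lapMatrix_compl_mulVec {f : V → ℝ} (hf : ∑ v, f v = 0) :
    Gᶜ.lapMatrix ℝ *ᵥ f = (Fintype.card V : ℝ) • f - G.lapMatrix ℝ *ᵥ f := by
  rw [← lapMatrix_top_mulVec hf, ← lapMatrix_add_lapMatrix_compl G, add_mulVec]
  abel

theorem lapMatrix_mulVec_eq_card_smul_iff {f : V → ℝ} (hf : ∑ v, f v = 0) :
    G.lapMatrix ℝ *ᵥ f = (Fintype.card V : ℝ) • f ↔ Gᶜ.lapMatrix ℝ *ᵥ f = 0 := by
  rw [lapMatrix_compl_mulVec hf, sub_eq_zero, eq_comm]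

theorem le_card_of_lapMatrix_mulVec_eq_smul {f : V → ℝ} {μ : ℝ} (hf0 : f ≠ 0)
    (hf : G.lapMatrix ℝ *ᵥ f = μ • f) : μ ≤ Fintype.card V := by
  rcases eq_or_ne μ 0 with rfl | hμ
  · positivity
  have hcompl : Gᶜ.lapMatrix ℝ *ᵥ f = ((Fintype.card V : ℝ) - μ) • f := by
    rw [lapMatrix_compl_mulVec (sum_eq_zero_of_lapMatrix_mulVec_eq_smul hf hμ), hf, sub_smul]
  have hnonneg : 0 ≤ ((Fintype.card V : ℝ) - μ) * (f ⬝ᵥ f) := by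
    simpa [hcompl] using (posSemidef_lapMatrix ℝ Gᶜ).dotProduct_mulVec_nonneg f
  have hpos : 0 < f ⬝ᵥ f := by simpa using dotProduct_star_self_pos_iff.2 hf0
  exact sub_nonneg.1 (nonneg_of_mul_nonneg_left hnonneg hpos)

theorem exists_lapMatrix_mulVec_eq_card_smul_of_isUniversal {c : V} (hc : G.IsUniversal c)
    (hV : 2 ≤ Fintype.card V) :
    ∃ f : V → ℝ, f ≠ 0 ∧ G.lapMatrix ℝ *ᵥ f = (Fintype.card V : ℝ) • f := by
  have hV' : (2 : ℝ) ≤ Fintype.card V := by exact_mod_cast hV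
  set f : V → ℝ := Pi.single c (Fintype.card V : ℝ) - fun _ ↦ 1
  have hsum : ∑ v, f v = 0 := by simp [f]
  refine ⟨f, fun h ↦ ?_, (lapMatrix_mulVec_eq_card_smul_iff hsum).2 <|
    (lapMatrix_mulVec_eq_zero_iff_forall_adj _).2 fun u v huv ↦ ?_⟩
  · have := congrFun h c
    simp only [Pi.sub_apply, Pi.single_eq_same, Pi.zero_apply, f] at this
    linarith
  · have hu : u ≠ c := by
      rintro rfl
      exact ((compl_adj G u v).1 huv).2 (hc huv.ne)
    have hv : v ≠ c := by
      rintro rfl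
      exact ((compl_adj G u v).1 huv).2 (hc huv.ne.symm).symm
    simp [f, hu, hv]

theorem IsTree.exists_isUniversal_of_lapMatrix_mulVec_eq_card_smul (hT : G.IsTree) {f : V → ℝ}
    (hf0 : f ≠ 0) (hf : G.lapMatrix ℝ *ᵥ f = (Fintype.card V : ℝ) • f) :
    ∃ c, G.IsUniversal c := by
  obtain ⟨u⟩ := hT.connected.nonempty
  have hcard : (Fintype.card V : ℝ) ≠ 0 := Nat.cast_ne_zero.2 (Fintype.card_pos_iff.2 ⟨u⟩).ne'
  have hsum : ∑ v, f v = 0 := sum_eq_zero_of_lapMatrix_mulVec_eq_smul hf hcard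
  refine hT.exists_isUniversal_of_not_preconnected_compl fun hpre ↦ hf0 ?_
  have hconst : ∀ v, f v = f u := fun v ↦ (lapMatrix_mulVec_eq_zero_iff_forall_reachable _).1
    ((lapMatrix_mulVec_eq_card_smul_iff hsum).1 hf) v u (hpre v u)
  have hu : f u = 0 := by
    simp only [hconst, sum_const, card_univ, nsmul_eq_mul, mul_eq_zero] at hsum
    exact hsum.resolve_left hcard
  ext v
  rw [hconst, hu, Pi.zero_apply]

end

end SimpleGraph

section

variable {V : Type*} [Fintype V] [DecidableEq V] {G : SimpleGraph V}

theorem isMaxEig_iff_isGreatest_lapMatrix [DecidableRel G.Adj] (lam : ℝ) :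
    IsMaxEig G lam ↔
      IsGreatest {μ : ℝ | ∃ f : V → ℝ, f ≠ 0 ∧ G.lapMatrix ℝ *ᵥ f = μ • f} lam := by
  rw [IsMaxEig, lap_eq_lapMatrix]

theorem IsMaxEig.le_card {lam : ℝ} (h : IsMaxEig G lam) : lam ≤ Fintype.card V := by
  classical
  obtain ⟨f, hf0, hf⟩ := ((isMaxEig_iff_isGreatest_lapMatrix lam).1 h).1
  exact le_card_of_lapMatrix_mulVec_eq_smul hf0 hf

theorem isMaxEig_card_of_isUniversal {c : V} (hc : G.IsUniversal c) (hV : 2 ≤ Fintype.card V) :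
    IsMaxEig G (Fintype.card V) := by
  classical
  rw [isMaxEig_iff_isGreatest_lapMatrix]
  exact ⟨exists_lapMatrix_mulVec_eq_card_smul_of_isUniversal hc hV,
    fun _ ⟨_, hf0, hf⟩ ↦ le_card_of_lapMatrix_mulVec_eq_smul hf0 hf⟩

theorem SimpleGraph.IsTree.exists_isUniversal_of_isMaxEig_card (hT : G.IsTree)
    (h : IsMaxEig G (Fintype.card V)) : ∃ c, G.IsUniversal c := by
  classical
  obtain ⟨f, hf0, hf⟩ := ((isMaxEig_iff_isGreatest_lapMatrix _).1 h).1
  exact hT.exists_isUniversal_of_lapMatrix_mulVec_eq_card_smul hf0 hf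

end

/-- Among all trees on `n ≥ 2` vertices, the star `K_{1,n-1}` is the unique
(up to isomorphism) maximizer of the largest Laplacian eigenvalue. -/
theorem stmt14 {V : Type*} [Fintype V] [DecidableEq V] (n : ℕ) (hn : 2 ≤ n)
    (hcard : Fintype.card V = n) (T : SimpleGraph V) (hT : T.IsTree)
    (lam : ℝ) (hlam : IsMaxEig T lam) :
    (∀ T'' : SimpleGraph V, T''.IsTree → ∀ lam'' : ℝ, IsMaxEig T'' lam'' → lam'' ≤ lam)
      ↔ Nonempty (T ≃g completeBipartiteGraph (Fin 1) (Fin (n - 1))) := by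
  subst hcard
  constructor
  · intro hmax
    obtain ⟨c⟩ := hT.connected.nonempty
    have hstar := isMaxEig_card_of_isUniversal (isUniversal_starGraph_self (r := c)) hn
    have hlam_eq : lam = Fintype.card V :=
      le_antisymm hlam.le_card (hmax _ (isTree_starGraph c) _ hstar)
    obtain ⟨c', hc'⟩ := hT.exists_isUniversal_of_isMaxEig_card (hlam_eq ▸ hlam)
    rw [hT.eq_starGraph_of_isUniversal hc']
    exact ⟨(completeBipartiteGraphIsoStarGraph c').symm.trans <| completeBipartiteGraphCongr
      (Fintype.equivFinOfCardEq (Fintype.card_subtype_eq c'))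
      (Fintype.equivFinOfCardEq (by simp [Fintype.card_subtype_compl]))⟩
  · rintro ⟨φ⟩ T'' - lam'' hlam''
    have hc : T.IsUniversal (φ.symm (Sum.inl 0)) :=
      φ.symm.isUniversal_iff.2 (isUniversal_completeBipartiteGraph_inl 0)
    rw [IsGreatest.unique hlam (isMaxEig_card_of_isUniversal hc hn)]
    exact hlam''.le_card
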